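/- If G is a connected simple graph that is not complete, then there exists a nonedge uv of G such that contracting uv (identifying u and v) does not increase the chromatic number; i.e., χ(G/uv) = χ(G). -/

import Mathlib

/-! A non-complete graph on `n` vertices is `(n - 1)`-colourable, so an optimal colouring gives
two distinct vertices `u, v` the same colour. They are nonadjacent, and the colouring descends to
`G/uv`; conversely, sending `v` to `u` is a homomorphism `G →g G/uv`, so contraction never lowers
the chromatic number. -/

open SimpleGraph

/-- Simple-graph contraction identifying vertex `v` into vertex `u`
(the merged vertex is `u`; vertex `v` is removed). -/
def SimpleGraph.contractPair {V : Type*} (G : SimpleGraph V) (u v : V) :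
    SimpleGraph {x : V // x ≠ v} where
  Adj x y := (x : V) ≠ (y : V) ∧
    (G.Adj x y ∨ ((x : V) = u ∧ G.Adj v y) ∨ ((y : V) = u ∧ G.Adj x v))
  symm := by
    refine ⟨?_⟩
    rintro x y ⟨hne, h⟩
    refine ⟨hne.symm, ?_⟩
    rcases h with h | ⟨hx, hv⟩ | ⟨hy, hv⟩
    · exact Or.inl h.symm
    · exact Or.inr (Or.inr ⟨hx, hv.symm⟩)
    · exact Or.inr (Or.inl ⟨hy, hv.symm⟩)
  loopless := by refine ⟨?_⟩; rintro x ⟨h, -⟩; exact h rfl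

/-- `H` is a minor of `G`: branch-set (model) definition. -/
def SimpleGraph.IsMinor {V W : Type*} (G : SimpleGraph V) (H : SimpleGraph W) : Prop :=
  ∃ f : W → Set V,
    (∀ w, (f w).Nonempty) ∧
    (∀ w, (G.induce (f w)).Connected) ∧
    (∀ w w', w ≠ w' → Disjoint (f w) (f w')) ∧
    (∀ w w', H.Adj w w' → ∃ a ∈ f w, ∃ b ∈ f w', G.Adj a b)

/-- The Hadwiger number: the largest `t` with a `K_t` minor. -/
noncomputable def SimpleGraph.hadwigerNumber {V : Type*} (G : SimpleGraph V) : ℕ :=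
  sSup {t | G.IsMinor (⊤ : SimpleGraph (Fin t))}

/-- `s` induces a cycle (of length ≥ 3) in `G`. -/
def SimpleGraph.IsInducedCycle {V : Type*} (G : SimpleGraph V) (s : Set V) : Prop :=
  ∃ n, 3 ≤ n ∧ Nonempty ((G.induce s) ≃g SimpleGraph.cycleGraph n)

/-- The set of induced cycles of `G`, as vertex sets. -/
def SimpleGraph.inducedCycles {V : Type*} (G : SimpleGraph V) : Set (Set V) :=
  {s | G.IsInducedCycle s}

namespace SimpleGraph

variable {V α : Type*} {G : SimpleGraph V} {u v : V}

@[simp]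
theorem contractPair_adj {x y : {x : V // x ≠ v}} :
    (G.contractPair u v).Adj x y ↔ (x : V) ≠ y ∧
      (G.Adj x y ∨ ((x : V) = u ∧ G.Adj v y) ∨ ((y : V) = u ∧ G.Adj x v)) :=
  Iff.rfl

def contractPairHom [DecidableEq V] (huv : u ≠ v) (hnadj : ¬ G.Adj u v) :
    G →g G.contractPair u v where
  toFun x := if hx : x = v then ⟨u, huv⟩ else ⟨x, hx⟩
  map_rel' {x y} hxy := by
    rw [contractPair_adj]
    split_ifs with hx hy hy
    · exact absurd (hx.trans hy.symm) hxy.ne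
    · subst hx
      exact ⟨by rintro rfl; exact hnadj hxy.symm, Or.inr (Or.inl ⟨rfl, hxy⟩)⟩
    · subst hy
      exact ⟨by rintro rfl; exact hnadj hxy, Or.inr (Or.inr ⟨rfl, hxy⟩)⟩
    · exact ⟨hxy.ne, Or.inl hxy⟩

theorem chromaticNumber_le_chromaticNumber_contractPair (huv : u ≠ v) (hnadj : ¬ G.Adj u v) :
    G.chromaticNumber ≤ (G.contractPair u v).chromaticNumber := by
  classical
  exact chromaticNumber_mono_of_hom (contractPairHom huv hnadj)

def Coloring.contractPair (C : G.Coloring α) (hC : C u = C v) :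
    (G.contractPair u v).Coloring α :=
  Coloring.mk (fun x => C x) fun {x y} ⟨_, hxy⟩ => by
    rcases hxy with hxy | ⟨hx, hvy⟩ | ⟨hy, hxv⟩
    · exact C.valid hxy
    · exact hx ▸ hC ▸ C.valid hvy
    · exact hy ▸ hC ▸ C.valid hxv

theorem chromaticNumber_contractPair_eq {n : ℕ} (C : G.Coloring (Fin n))
    (hn : G.chromaticNumber = n) (huv : u ≠ v) (hC : C u = C v) :
    (G.contractPair u v).chromaticNumber = G.chromaticNumber :=
  le_antisymm (hn ▸ chromaticNumber_le_iff_colorable.mpr ⟨C.contractPair hC⟩)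
    (chromaticNumber_le_chromaticNumber_contractPair huv fun h => C.valid h hC)

theorem chromaticNumber_lt_card_of_ne_top [Fintype V] (hG : G ≠ ⊤) :
    G.chromaticNumber < Fintype.card V :=
  G.chromaticNumber_le_card.lt_of_ne (mt chromaticNumber_eq_card_iff.mp hG)

theorem exists_optimal_coloring_not_injective [Fintype V] (hG : G ≠ ⊤) :
    ∃ (n : ℕ) (C : G.Coloring (Fin n)), G.chromaticNumber = n ∧ ¬ Function.Injective C := by
  have hlt := chromaticNumber_lt_card_of_ne_top hG
  have hn : G.chromaticNumber = G.chromaticNumber.toNat :=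
    (ENat.natCast_toNat (hlt.trans (ENat.natCast_lt_top _)).ne).symm
  obtain ⟨C⟩ := G.colorable_chromaticNumber_of_fintype
  refine ⟨_, C, hn, fun hC => ?_⟩
  rw [hn, Nat.cast_lt] at hlt
  exact (Fintype.card_le_of_injective C hC).not_gt (by simpa using hlt)

end SimpleGraph

theorem stmt2_general {V : Type*} [Fintype V] (G : SimpleGraph V)
    (hnc : G ≠ ⊤) :
    ∃ u v : V, u ≠ v ∧ ¬ G.Adj u v ∧
      (G.contractPair u v).chromaticNumber = G.chromaticNumber := by
  obtain ⟨n, C, hn, hC⟩ := G.exists_optimal_coloring_not_injective hnc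
  obtain ⟨u, v, hCuv, huv⟩ := Function.not_injective_iff.mp hC
  exact ⟨u, v, huv, fun h => C.valid h hCuv, chromaticNumber_contractPair_eq C hn huv hCuv⟩

theorem stmt2 {V : Type*} [Fintype V] (G : SimpleGraph V)
    (hconn : G.Connected) (hnc : G ≠ ⊤) :
    ∃ u v : V, u ≠ v ∧ ¬ G.Adj u v ∧
      (G.contractPair u v).chromaticNumber = G.chromaticNumber :=
  stmt2_general G hnc
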